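/- Under randomization of Z, exclusion restriction, and monotonicity Y₀ ≤ Y₁, if P(Y₀ = 1) > 0, then the average principal causal effect for the Always-High stratum, E[R₁ − R₀ | Y₀ = 1, Y₁ = 1], equals (P(R = 0, Y = 1 | Z = 0) − P(R = 0, Y = 1 | Z = 1)) / P(Y₀ = 1). -/
import Mathlib


open Finset
open scoped Classical

namespace PS

/-- Probability of an event `A` under weight function `p` on a finite sample space. -/
noncomputable def Prob {Ω : Type*} [Fintype Ω] (p : Ω → ℝ) (A : Ω → Prop) : ℝ :=
  ∑ ω ∈ Finset.univ.filter A, p ω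

/-- Conditional probability `P(A | B)`. -/
noncomputable def CProb {Ω : Type*} [Fintype Ω] (p : Ω → ℝ) (A B : Ω → Prop) : ℝ :=
  Prob p (fun ω => A ω ∧ B ω) / Prob p B

/-- Conditional expectation `E[f | B]`. -/
noncomputable def CExp {Ω : Type*} [Fintype Ω] (p : Ω → ℝ) (f : Ω → ℝ) (B : Ω → Prop) : ℝ :=
  (∑ ω ∈ Finset.univ.filter B, p ω * f ω) / Prob p B

/-- Indicator of a Boolean value, as a real number. -/
def ind (b : Bool) : ℝ := if b then 1 else 0

/-- Observed recommendation `R = R_Z`. -/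
def obsR {Ω : Type*} (Z R₀ R₁ : Ω → Bool) (ω : Ω) : Bool := if Z ω then R₁ ω else R₀ ω

/-- Observed outcome `Y = Y_R` (exclusion restriction). -/
def obsY {Ω : Type*} (Rv Y₀ Y₁ : Ω → Bool) (ω : Ω) : Bool := if Rv ω then Y₁ ω else Y₀ ω

/-- `Z` is independent of the vector `(R₀, R₁, Y₀, Y₁)`. -/
def IndepZ {Ω : Type*} [Fintype Ω] (p : Ω → ℝ) (Z R₀ R₁ Y₀ Y₁ : Ω → Bool) : Prop :=
  ∀ z a b c d : Bool,
    Prob p (fun ω => Z ω = z ∧ R₀ ω = a ∧ R₁ ω = b ∧ Y₀ ω = c ∧ Y₁ ω = d) =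
      Prob p (fun ω => Z ω = z) *
        Prob p (fun ω => R₀ ω = a ∧ R₁ ω = b ∧ Y₀ ω = c ∧ Y₁ ω = d)

lemma Prob_congr {Ω : Type*} [Fintype Ω] (p : Ω → ℝ) {A B : Ω → Prop}
    (h : ∀ ω, A ω ↔ B ω) : Prob p A = Prob p B := by
  unfold Prob
  congr 1
  exact Finset.filter_congr (fun ω _ => by simp [h ω])

lemma Prob_eq_sum_ite {Ω : Type*} [Fintype Ω] (p : Ω → ℝ) (A : Ω → Prop) :
    Prob p A = ∑ ω, if A ω then p ω else 0 := Finset.sum_filter _ _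

/-- Decompose a probability over the values of the four-variable vector. -/
lemma Prob_decomp {Ω : Type*} [Fintype Ω] (p : Ω → ℝ) (R₀ R₁ Y₀ Y₁ : Ω → Bool)
    (Q : Ω → Prop) (E : Bool → Bool → Bool → Bool → Prop) :
    Prob p (fun ω => Q ω ∧ E (R₀ ω) (R₁ ω) (Y₀ ω) (Y₁ ω)) =
      ∑ v : Bool × Bool × Bool × Bool,
        if E v.1 v.2.1 v.2.2.1 v.2.2.2 then
          Prob p (fun ω => Q ω ∧ R₀ ω = v.1 ∧ R₁ ω = v.2.1 ∧ Y₀ ω = v.2.2.1 ∧ Y₁ ω = v.2.2.2)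
        else 0 := by
  classical
  have : ∀ v : Bool × Bool × Bool × Bool,
      (if E v.1 v.2.1 v.2.2.1 v.2.2.2 then
          Prob p (fun ω => Q ω ∧ R₀ ω = v.1 ∧ R₁ ω = v.2.1 ∧ Y₀ ω = v.2.2.1 ∧ Y₁ ω = v.2.2.2)
        else 0) =
      ∑ ω : Ω, if E v.1 v.2.1 v.2.2.1 v.2.2.2 ∧ Q ω ∧ R₀ ω = v.1 ∧ R₁ ω = v.2.1 ∧ Y₀ ω = v.2.2.1 ∧ Y₁ ω = v.2.2.2
          then p ω else 0 := by
    intro v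
    by_cases hE : E v.1 v.2.1 v.2.2.1 v.2.2.2
    · rw [if_pos hE, Prob_eq_sum_ite]
      exact Finset.sum_congr rfl fun ω _ => by simp [hE]
    · rw [if_neg hE]
      simp [hE]
  rw [Finset.sum_congr rfl fun v _ => this v, Finset.sum_comm, Prob_eq_sum_ite]
  refine Finset.sum_congr rfl fun ω _ => ?_
  rw [Finset.sum_eq_single (R₀ ω, R₁ ω, Y₀ ω, Y₁ ω)]
  · by_cases hQ : Q ω <;> simp [hQ, and_comm]
  · intro v _ hv
    rw [if_neg]
    rintro ⟨-, -, h1, h2, h3, h4⟩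
    exact hv (by obtain ⟨a, b, c, d⟩ := v; simp_all)
  · simp

/-- General independence: `Z = z` is independent of any event of the vector. -/
lemma indep_event {Ω : Type*} [Fintype Ω] (p : Ω → ℝ) (Z R₀ R₁ Y₀ Y₁ : Ω → Bool)
    (hindep : IndepZ p Z R₀ R₁ Y₀ Y₁) (z : Bool) (E : Bool → Bool → Bool → Bool → Prop) :
    Prob p (fun ω => Z ω = z ∧ E (R₀ ω) (R₁ ω) (Y₀ ω) (Y₁ ω)) =
      Prob p (fun ω => Z ω = z) * Prob p (fun ω => E (R₀ ω) (R₁ ω) (Y₀ ω) (Y₁ ω)) := by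
  classical
  rw [Prob_decomp p R₀ R₁ Y₀ Y₁ (fun ω => Z ω = z) E]
  have h2 : Prob p (fun ω => E (R₀ ω) (R₁ ω) (Y₀ ω) (Y₁ ω)) =
      Prob p (fun ω => True ∧ E (R₀ ω) (R₁ ω) (Y₀ ω) (Y₁ ω)) := Prob_congr p (by simp)
  rw [h2, Prob_decomp p R₀ R₁ Y₀ Y₁ (fun _ => True) E, Finset.mul_sum]
  refine Finset.sum_congr rfl fun v _ => ?_
  by_cases hE : E v.1 v.2.1 v.2.2.1 v.2.2.2
  · rw [if_pos hE, if_pos hE, hindep z v.1 v.2.1 v.2.2.1 v.2.2.2]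
    congr 1
    exact Prob_congr p (by simp)
  · simp [hE]

lemma Prob_split {Ω : Type*} [Fintype Ω] (p : Ω → ℝ) (B : Ω → Bool) (A : Ω → Prop) :
    Prob p A = Prob p (fun ω => B ω = true ∧ A ω) + Prob p (fun ω => B ω = false ∧ A ω) := by
  classical
  rw [Prob_eq_sum_ite, Prob_eq_sum_ite, Prob_eq_sum_ite, ← Finset.sum_add_distrib]
  refine Finset.sum_congr rfl fun ω _ => ?_
  by_cases hA : A ω <;> cases hB : B ω <;> simp [hA, hB]

theorem stmt6 {Ω : Type*} [Fintype Ω] (p : Ω → ℝ) (Z R₀ R₁ Y₀ Y₁ : Ω → Bool)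
    (hp : ∀ ω, 0 ≤ p ω) (hsum : ∑ ω, p ω = 1)
    (hZpos : ∀ z : Bool, 0 < Prob p (fun ω => Z ω = z))
    (hindep : IndepZ p Z R₀ R₁ Y₀ Y₁)
    (hmono : ∀ ω, Y₀ ω = true → Y₁ ω = true)
    (hAH : 0 < Prob p (fun ω => Y₀ ω = true)) :
    CExp p (fun ω => ind (R₁ ω) - ind (R₀ ω)) (fun ω => Y₀ ω = true ∧ Y₁ ω = true) =
      (CProb p (fun ω => obsR Z R₀ R₁ ω = false ∧ obsY (obsR Z R₀ R₁) Y₀ Y₁ ω = true) (fun ω => Z ω = false) -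
        CProb p (fun ω => obsR Z R₀ R₁ ω = false ∧ obsY (obsR Z R₀ R₁) Y₀ Y₁ ω = true) (fun ω => Z ω = true)) /
        Prob p (fun ω => Y₀ ω = true) := by
  classical
  set S := Prob p (fun ω => Y₀ ω = true) with hSdef
  -- AH stratum equals {Y₀ = 1}
  have hAHiff : ∀ ω, (Y₀ ω = true ∧ Y₁ ω = true) ↔ Y₀ ω = true :=
    fun ω => ⟨fun h => h.1, fun h => ⟨h, hmono ω h⟩⟩
  -- conditional probabilities simplify
  have hC0 : CProb p (fun ω => obsR Z R₀ R₁ ω = false ∧ obsY (obsR Z R₀ R₁) Y₀ Y₁ ω = true)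
      (fun ω => Z ω = false) = Prob p (fun ω => R₀ ω = false ∧ Y₀ ω = true) := by
    unfold CProb
    have he : Prob p (fun ω => (obsR Z R₀ R₁ ω = false ∧ obsY (obsR Z R₀ R₁) Y₀ Y₁ ω = true) ∧ Z ω = false)
        = Prob p (fun ω => Z ω = false) * Prob p (fun ω => R₀ ω = false ∧ Y₀ ω = true) :=
      (Prob_congr p fun ω => by
        cases hZ : Z ω <;> cases hR : R₀ ω <;> simp [obsR, obsY, hZ, hR]).trans
        (indep_event p Z R₀ R₁ Y₀ Y₁ hindep false (fun a b c d => a = false ∧ c = true))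
    rw [he, mul_comm, mul_div_assoc, div_self (ne_of_gt (hZpos false)), mul_one]
  have hC1 : CProb p (fun ω => obsR Z R₀ R₁ ω = false ∧ obsY (obsR Z R₀ R₁) Y₀ Y₁ ω = true)
      (fun ω => Z ω = true) = Prob p (fun ω => R₁ ω = false ∧ Y₀ ω = true) := by
    unfold CProb
    have he : Prob p (fun ω => (obsR Z R₀ R₁ ω = false ∧ obsY (obsR Z R₀ R₁) Y₀ Y₁ ω = true) ∧ Z ω = true)
        = Prob p (fun ω => Z ω = true) * Prob p (fun ω => R₁ ω = false ∧ Y₀ ω = true) :=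
      (Prob_congr p fun ω => by
        cases hZ : Z ω <;> cases hR : R₁ ω <;> simp [obsR, obsY, hZ, hR]).trans
        (indep_event p Z R₀ R₁ Y₀ Y₁ hindep true (fun a b c d => b = false ∧ c = true))
    rw [he, mul_comm, mul_div_assoc, div_self (ne_of_gt (hZpos true)), mul_one]
  rw [hC0, hC1]
  -- numerator of CExp
  unfold CExp
  have hfil : Finset.univ.filter (fun ω => Y₀ ω = true ∧ Y₁ ω = true)
      = Finset.univ.filter (fun ω => Y₀ ω = true) :=
    Finset.filter_congr (fun ω _ => by simp [hAHiff ω])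
  have hProbAH : Prob p (fun ω => Y₀ ω = true ∧ Y₁ ω = true) = S := by
    exact Prob_congr p hAHiff
  have hnum : ∑ ω ∈ Finset.univ.filter (fun ω => Y₀ ω = true ∧ Y₁ ω = true),
      p ω * (ind (R₁ ω) - ind (R₀ ω))
      = Prob p (fun ω => R₀ ω = false ∧ Y₀ ω = true) - Prob p (fun ω => R₁ ω = false ∧ Y₀ ω = true) := by
    rw [hfil]
    have e1 : ∑ ω ∈ Finset.univ.filter (fun ω => Y₀ ω = true), p ω * (ind (R₁ ω) - ind (R₀ ω))
        = (∑ ω ∈ Finset.univ.filter (fun ω => Y₀ ω = true), p ω * ind (R₁ ω))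
          - ∑ ω ∈ Finset.univ.filter (fun ω => Y₀ ω = true), p ω * ind (R₀ ω) := by
      rw [← Finset.sum_sub_distrib]
      exact Finset.sum_congr rfl fun ω _ => by ring
    have e2 : ∀ (Rv : Ω → Bool), ∑ ω ∈ Finset.univ.filter (fun ω => Y₀ ω = true), p ω * ind (Rv ω)
        = Prob p (fun ω => Rv ω = true ∧ Y₀ ω = true) := by
      intro Rv
      rw [Prob_eq_sum_ite, Finset.sum_filter]
      refine Finset.sum_congr rfl fun ω _ => ?_
      cases hY : Y₀ ω <;> cases hR : Rv ω <;> simp [ind, hY, hR]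
    have e3 : ∀ (Rv : Ω → Bool), Prob p (fun ω => Rv ω = true ∧ Y₀ ω = true)
        = S - Prob p (fun ω => Rv ω = false ∧ Y₀ ω = true) := by
      intro Rv
      have := Prob_split p Rv (fun ω => Y₀ ω = true)
      rw [hSdef]; linarith [this]
    rw [e1, e2 R₁, e2 R₀, e3 R₁, e3 R₀]
    ring
  rw [hProbAH]
  beta_reduce
  convert congrArg (· / S) hnum using 2
  congr!

end PS
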